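/- arXiv:2301.05930 — 2 statements merged into one kernel-verified Lean document; each statement's English description precedes it below -/
import Mathlib

section
/- For every a > 0 and every function φ in H¹(0,∞), one has κ(a)·∫₀^{1/2} φ² dt ≤ ∫₀^∞ (φ')² dt + a²·∫_{1/2}^∞ φ² dt, where κ(a) is the smallest positive root of the equation √κ · tan(√κ/2) = a. -/
/-!
Put `μ = √κ`. Minimality of `κ` forces `μ < π`, so `g t = -μ tan (μ t)` solves the Riccati equation
`g' = -κ - g²` on `[0, 1/2]`, with `g 0 = 0` and `g (1/2) = -a`. Completing the square,
`φ'² - κ φ² - (g φ²)' = (φ' - g φ)² ≥ 0`, and integrating over `[0, 1/2]` gives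
`κ ∫₀^{1/2} φ² ≤ ∫₀^{1/2} φ'² + a φ(1/2)²`. On `(1/2, ∞)`, where `φ² → 0` at infinity, integrating
`(φ' + a φ)² ≥ 0` bounds the boundary term `a φ(1/2)²` by `∫ φ'² + a² ∫ φ²`.
-/

open MeasureTheory Set Filter Topology Real

lemma aestronglyMeasurable_of_hasDerivAt {φ φ' : ℝ → ℝ} {s : Set ℝ} (hs : MeasurableSet s)
    (hφ : ∀ t ∈ s, HasDerivAt φ (φ' t) t) : AEStronglyMeasurable φ' (volume.restrict s) :=
  (measurable_deriv φ).aestronglyMeasurable.congr <|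
    (ae_restrict_iff' hs).2 <| Eventually.of_forall fun t ht => (hφ t ht).deriv

theorem mul_sq_le_integral_Ioi_of_hasDerivAt {φ φ' : ℝ → ℝ} (c a : ℝ)
    (hφ : ∀ t ∈ Ici c, HasDerivAt φ (φ' t) t)
    (hφ2 : IntegrableOn (fun t => φ t ^ 2) (Ioi c))
    (hφ'2 : IntegrableOn (fun t => φ' t ^ 2) (Ioi c)) :
    a * φ c ^ 2 ≤ (∫ t in Ioi c, φ' t ^ 2) + a ^ 2 * ∫ t in Ioi c, φ t ^ 2 := by
  have hφ_memLp : MemLp φ 2 (volume.restrict (Ioi c)) :=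
    (memLp_two_iff_integrable_sq (ContinuousOn.aestronglyMeasurable
      (fun t ht => (hφ t (mem_Ici_of_Ioi ht)).continuousAt.continuousWithinAt)
      measurableSet_Ioi)).2 hφ2
  have hφ'_memLp : MemLp φ' 2 (volume.restrict (Ioi c)) :=
    (memLp_two_iff_integrable_sq (aestronglyMeasurable_of_hasDerivAt measurableSet_Ioi
      fun t ht => hφ t (mem_Ici_of_Ioi ht))).2 hφ'2
  have hsq_deriv : ∀ t ∈ Ici c, HasDerivAt (fun s => φ s ^ 2) (2 * φ t * φ' t) t :=
    fun t ht => by simpa [mul_comm] using (hφ t ht).fun_pow 2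
  have hsq_deriv_int : IntegrableOn (fun t => 2 * φ t * φ' t) (Ioi c) := by
    refine ((hφ_memLp.integrable_mul hφ'_memLp).const_mul 2).congr
      (Eventually.of_forall fun t => ?_)
    simp only [Pi.mul_apply, mul_assoc]
  have hsq_tendsto : Tendsto (fun t => φ t ^ 2) atTop (𝓝 0) :=
    tendsto_zero_of_hasDerivAt_of_integrableOn_Ioi
      (fun t ht => hsq_deriv t (mem_Ici_of_Ioi ht)) hsq_deriv_int hφ2
  have hFTC : ∫ t in Ioi c, 2 * φ t * φ' t = -φ c ^ 2 := by
    rw [integral_Ioi_of_hasDerivAt_of_tendsto' hsq_deriv hsq_deriv_int hsq_tendsto, zero_sub]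
  have hexpand : ∫ t in Ioi c, (φ' t + a * φ t) ^ 2 = (∫ t in Ioi c, φ' t ^ 2) +
      a ^ 2 * (∫ t in Ioi c, φ t ^ 2) + a * ∫ t in Ioi c, 2 * φ t * φ' t := by
    have hsquare : (fun t => (φ' t + a * φ t) ^ 2) =
        fun t => (φ' t ^ 2 + a ^ 2 * φ t ^ 2) + a * (2 * φ t * φ' t) := by
      ext t; ring
    rw [hsquare, integral_add (hφ'2.fun_add (hφ2.const_mul _)) (hsq_deriv_int.const_mul _),
      integral_add hφ'2 (hφ2.const_mul _), integral_const_mul, integral_const_mul]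
  have hnonneg : 0 ≤ ∫ t in Ioi c, (φ' t + a * φ t) ^ 2 :=
    setIntegral_nonneg measurableSet_Ioi fun _ _ => sq_nonneg _
  rw [hexpand, hFTC] at hnonneg
  linarith

theorem mul_integral_sq_le_of_riccati {φ φ' g : ℝ → ℝ} {κ x y : ℝ} (hxy : x ≤ y)
    (hg : ∀ t ∈ Icc x y, HasDerivAt g (-κ - g t ^ 2) t)
    (hφ : ∀ t ∈ Icc x y, HasDerivAt φ (φ' t) t)
    (hφ' : IntervalIntegrable (fun t => φ' t ^ 2) volume x y) :
    κ * ∫ t in x..y, φ t ^ 2 ≤ (∫ t in x..y, φ' t ^ 2) + g x * φ x ^ 2 - g y * φ y ^ 2 := by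
  have hderiv : ∀ t ∈ Icc x y, HasDerivAt (fun s => g s * φ s ^ 2)
      ((-κ - g t ^ 2) * φ t ^ 2 + g t * (2 * φ t * φ' t)) t := fun t ht => by
    refine ((hg t ht).fun_mul ((hφ t ht).fun_pow 2)).congr_deriv ?_
    push_cast
    ring
  have hφ2 : IntervalIntegrable (fun t => φ t ^ 2) volume x y := by
    refine ContinuousOn.intervalIntegrable ?_
    rw [uIcc_of_le hxy]
    exact fun t ht => ((hφ t ht).continuousAt.pow 2).continuousWithinAt
  have hFTC := intervalIntegral.sub_le_integral_of_hasDeriv_right_of_le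
    (φ := fun t => φ' t ^ 2 - κ * φ t ^ 2) hxy
    (fun t ht => (hderiv t ht).continuousAt.continuousWithinAt)
    (fun t ht => (hderiv t (Ioo_subset_Icc_self ht)).hasDerivWithinAt)
    (by rw [integrableOn_Icc_iff_integrableOn_Ioc,
          ← intervalIntegrable_iff_integrableOn_Ioc_of_le hxy]
        exact hφ'.sub (hφ2.const_mul κ))
    fun t _ => by nlinarith [sq_nonneg (φ' t - g t * φ t)]
  rw [intervalIntegral.integral_sub hφ' (hφ2.const_mul κ), intervalIntegral.integral_const_mul]
    at hFTC
  linarith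

lemma hasDerivAt_neg_mul_tan_mul {μ t : ℝ} (h : cos (μ * t) ≠ 0) :
    HasDerivAt (fun s => -μ * tan (μ * s)) (-μ ^ 2 - (-μ * tan (μ * t)) ^ 2) t := by
  refine (((hasDerivAt_tan h).comp t ((hasDerivAt_id t).const_mul μ)).const_mul (-μ)).congr_deriv ?_
  rw [← inv_one_add_tan_sq h]
  field_simp
  ring

lemma tendsto_mul_tan_half_nhdsLT_pi : Tendsto (fun x => x * tan (x / 2)) (𝓝[<] π) atTop := by
  refine Tendsto.pos_mul_atTop pi_pos (tendsto_id.mono_left nhdsWithin_le_nhds) ?_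
  refine tendsto_tan_pi_div_two.comp <| ((continuous_id.div_const 2).tendsto π).inf ?_
  exact tendsto_principal_principal.2 fun x (hx : x < π) => show x / 2 < π / 2 by linarith

lemma exists_mem_Ioo_mul_tan_half_eq {a : ℝ} (ha : 0 < a) :
    ∃ x ∈ Ioo 0 π, x * tan (x / 2) = a := by
  obtain ⟨b, hab, hb⟩ :=
    ((tendsto_mul_tan_half_nhdsLT_pi.eventually_gt_atTop a).and (Ioo_mem_nhdsLT pi_pos)).exists
  have hcont : ContinuousOn (fun x => x * tan (x / 2)) (Icc 0 b) := fun x hx => by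
    have hcos : cos (x / 2) ≠ 0 :=
      (cos_pos_of_mem_Ioo ⟨by linarith [hx.1, pi_pos], by linarith [hx.2, hb.2]⟩).ne'
    exact (continuousAt_id.mul ((continuousAt_tan.2 hcos).comp (f := fun y : ℝ => y / 2)
      (continuousAt_id.div_const 2))).continuousWithinAt
  obtain ⟨x, hx, hfx⟩ := intermediate_value_Ioo hb.1.le hcont ⟨by simpa using ha, hab⟩
  exact ⟨x, ⟨hx.1, hx.2.trans hb.2⟩, hfx⟩

lemma sqrt_lt_pi_of_forall_root_le {a κ : ℝ} (ha : 0 < a)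
    (hκmin : ∀ κ' : ℝ, 0 < κ' → √κ' * tan (√κ' / 2) = a → κ ≤ κ') : √κ < π := by
  obtain ⟨x, hx, hx_root⟩ := exists_mem_Ioo_mul_tan_half_eq ha
  have hκx := hκmin (x ^ 2) (by positivity [hx.1]) (by rwa [sqrt_sq hx.1.le])
  calc √κ ≤ √(x ^ 2) := sqrt_le_sqrt hκx
    _ = x := sqrt_sq hx.1.le
    _ < π := hx.2

/-- Friedrichs inequality on the half-line: for `a > 0` and `κ` the smallest positive root of
`√κ · tan(√κ/2) = a`, every `φ ∈ H¹(0,∞)` satisfies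
`κ ∫₀^{1/2} φ² ≤ ∫₀^∞ (φ')² + a² ∫_{1/2}^∞ φ²`. -/
theorem friedrichs_half_line (a κ : ℝ) (ha : 0 < a)
    (hκpos : 0 < κ)
    (hκroot : Real.sqrt κ * Real.tan (Real.sqrt κ / 2) = a)
    (hκmin : ∀ κ' : ℝ, 0 < κ' → Real.sqrt κ' * Real.tan (Real.sqrt κ' / 2) = a → κ ≤ κ')
    (φ φ' : ℝ → ℝ)
    (hφ : ∀ t, HasDerivAt φ (φ' t) t)
    (hφL2 : IntegrableOn (fun t => (φ t) ^ 2) (Ioi (0 : ℝ)))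
    (hφ'L2 : IntegrableOn (fun t => (φ' t) ^ 2) (Ioi (0 : ℝ))) :
    κ * ∫ t in Ioo (0 : ℝ) (1 / 2), (φ t) ^ 2 ≤
      (∫ t in Ioi (0 : ℝ), (φ' t) ^ 2) + a ^ 2 * ∫ t in Ioi (1 / 2 : ℝ), (φ t) ^ 2 := by
  have hμ_lt_pi := sqrt_lt_pi_of_forall_root_le ha hκmin
  have hμ_nonneg := sqrt_nonneg κ
  have hg : ∀ t ∈ Icc (0 : ℝ) (1 / 2), HasDerivAt (fun s => -√κ * tan (√κ * s))
      (-κ - (-√κ * tan (√κ * t)) ^ 2) t := fun t ht => by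
    simpa only [sq_sqrt hκpos.le] using hasDerivAt_neg_mul_tan_mul (μ := √κ)
      (cos_pos_of_mem_Ioo ⟨by nlinarith [ht.1], by nlinarith [ht.2]⟩).ne'
  have hinner := mul_integral_sq_le_of_riccati (by norm_num) hg (fun t _ => hφ t)
    ((intervalIntegrable_iff_integrableOn_Ioc_of_le (by norm_num)).2
      (hφ'L2.mono_set Ioc_subset_Ioi_self))
  have hhalf : Ioi (1 / 2 : ℝ) ⊆ Ioi 0 := Ioi_subset_Ioi (by norm_num)
  have houter := mul_sq_le_integral_Ioi_of_hasDerivAt (1 / 2) a (fun t _ => hφ t)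
    (hφL2.mono_set hhalf) (hφ'L2.mono_set hhalf)
  have hg_half : -√κ * tan (√κ * (1 / 2)) = -a := by
    rw [← hκroot]; ring_nf
  have hφ'_split := intervalIntegral.integral_interval_add_Ioi hφ'L2 (hφ'L2.mono_set hhalf)
  rw [intervalIntegral.integral_of_le (by norm_num), integral_Ioc_eq_integral_Ioo] at hinner
  simp only [hg_half, mul_zero, tan_zero] at hinner
  linarith
end

section
/- Let φ ∈ H¹(Ω₁⁺) where Ω₁⁺ is the half-junction domain, and suppose the Friedrichs-type bounds (a) 2π²∫_{L₁⁺}φ² ≤ ∫_{L₁⁺}|∇φ|², (b) π²∫_{Q₁⁺}φ² ≤ ∫_{Q₁⁺}(∂₁φ)², (c) (π²/2)∫_{Q₁⁺}φ² ≤ ∫_{S₂}(∂₂φ)² + (5π²/2)∫_{S₂⁺∪S₂⁻}φ², (d) the analogous bound with indices 2 and 3 swapped, and (e) 5π²∫_{S₂^±}φ² ≤ ∫_{S₂^±}((∂₁φ)² + (∂₃φ)²) and 5π²∫_{S₃^±}φ² ≤ ∫_{S₃^±}((∂₁φ)² + (∂₂φ)²) all hold. Then 2π²∫_{Ω₁⁺}φ²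 ≤ ∫_{Ω₁⁺}|∇φ|². -/
/-!
Up to the null planes `x₁ = 1/2`, `x₂ = ±1/2`, `x₃ = ±1/2`, the half-junction `Ω₁⁺` is the
disjoint union of `L₁⁺`, `S₂` and `S₃^±`, and `S₂`, `S₃` are the disjoint unions `Q₁⁺ ∪ S₂^±`,
`Q₁⁺ ∪ S₃^±`. After splitting every integral over these pieces the claim is a linear
combination of the hypotheses: (b) + (c) + (d) bound `2π² ∫_{Q₁⁺} φ²` at the price of
`5π²/2 ∫ φ²` on each slab `S^±`, and (e) pays for that together with the slab's own share
`2π² ∫_{S^±} φ²`, because `2 + 5/2 ≤ 5`.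
-/

open MeasureTheory Set Real

theorem MeasureTheory.setIntegral_eq_add_of_ae_eq_union {α E : Type*} [MeasurableSpace α]
    [NormedAddCommGroup E] [NormedSpace ℝ E] {μ : Measure α} {f : α → E} {s t u : Set α}
    (hs : s =ᵐ[μ] (t ∪ u : Set α)) (htu : Disjoint t u) (hu : MeasurableSet u)
    (hf : IntegrableOn f s μ) :
    ∫ x in s, f x ∂μ = ∫ x in t, f x ∂μ + ∫ x in u, f x ∂μ := by
  have hf' : IntegrableOn f (t ∪ u) μ := hf.congr_set_ae hs.symm
  rw [setIntegral_congr_set hs, setIntegral_union htu hu hf'.left_of_union hf'.right_of_union]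

theorem MeasureTheory.integral_add_add {α E : Type*} [MeasurableSpace α] [NormedAddCommGroup E]
    [NormedSpace ℝ E] {μ : Measure α} {f g h : α → E} (hf : Integrable f μ)
    (hg : Integrable g μ) (hh : Integrable h μ) :
    ∫ a, f a + g a + h a ∂μ = ∫ a, f a ∂μ + ∫ a, g a ∂μ + ∫ a, h a ∂μ :=
  (integral_add (hf.add hg) hh).trans (congrArg (· + _) (integral_add hf hg))

theorem MeasureTheory.Measure.ae_fst_ne {α β : Type*} [MeasurableSpace α] [MeasurableSpace β]
    {μ : Measure α} [NullSingletonClass μ] {ν : Measure β} (a : α) :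
    ∀ᵐ p ∂μ.prod ν, p.1 ≠ a :=
  Measure.quasiMeasurePreserving_fst.ae (Measure.ae_ne μ a)

theorem MeasureTheory.Measure.ae_snd_ne {α β : Type*} [MeasurableSpace α] [MeasurableSpace β]
    {μ : Measure α} {ν : Measure β} [NullSingletonClass ν] (b : β) :
    ∀ᵐ p ∂μ.prod ν, p.2 ≠ b :=
  Measure.quasiMeasurePreserving_snd.ae (Measure.ae_ne ν b)

namespace CrossJunction

/- The paper's `L₁, L₂, L₃, Ω₁⁺, L₁⁺, Q₁⁺, S₂, S₃, S₂^±, S₃^±`. They are reducible so that, once the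
defining equations of the theorem are substituted, its sets are syntactically these ones. -/

abbrev arm₁ : Set (ℝ × ℝ × ℝ) := {x | |x.2.1| < 1 / 2 ∧ |x.2.2| < 1 / 2}
abbrev arm₂ : Set (ℝ × ℝ × ℝ) := {x | |x.1| < 1 / 2 ∧ |x.2.2| < 1 / 2}
abbrev arm₃ : Set (ℝ × ℝ × ℝ) := {x | |x.1| < 1 / 2 ∧ |x.2.1| < 1 / 2}
abbrev halfJunction : Set (ℝ × ℝ × ℝ) := {x ∈ arm₁ ∪ arm₂ ∪ arm₃ | 0 < x.1}
abbrev halfArm₁ : Set (ℝ × ℝ × ℝ) := {x ∈ arm₁ | 1 / 2 < x.1}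
abbrev cube : Set (ℝ × ℝ × ℝ) :=
  {x | 0 < x.1 ∧ x.1 < 1 / 2 ∧ |x.2.1| < 1 / 2 ∧ |x.2.2| < 1 / 2}
abbrev slab₂ : Set (ℝ × ℝ × ℝ) := {x ∈ arm₂ | 0 < x.1}
abbrev slab₃ : Set (ℝ × ℝ × ℝ) := {x ∈ arm₃ | 0 < x.1}
abbrev slab₂Pos : Set (ℝ × ℝ × ℝ) := {x ∈ slab₂ | 1 / 2 < x.2.1}
abbrev slab₂Neg : Set (ℝ × ℝ × ℝ) := {x ∈ slab₂ | x.2.1 < -(1 / 2)}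
abbrev slab₃Pos : Set (ℝ × ℝ × ℝ) := {x ∈ slab₃ | 1 / 2 < x.2.2}
abbrev slab₃Neg : Set (ℝ × ℝ × ℝ) := {x ∈ slab₃ | x.2.2 < -(1 / 2)}

theorem halfJunction_ae_eq :
    halfJunction =ᵐ[volume] (halfArm₁ ∪ slab₂ ∪ (slab₃Pos ∪ slab₃Neg) : Set (ℝ × ℝ × ℝ)) := by
  refine Filter.eventuallyEq_set.2 ?_
  filter_upwards [Measure.ae_fst_ne (1 / 2),
    Measure.quasiMeasurePreserving_snd.ae (Measure.ae_snd_ne (1 / 2)),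
    Measure.quasiMeasurePreserving_snd.ae (Measure.ae_snd_ne (-(1 / 2)))] with x h₁ h₃ h₃'
  simp only [mem_union, mem_ofPred_eq, abs_lt]
  rcases h₁.lt_or_gt with h₁ | h₁ <;> rcases h₃.lt_or_gt with h₃ | h₃ <;>
    rcases h₃'.lt_or_gt with h₃' | h₃' <;> grind

theorem slab₂_ae_eq :
    slab₂ =ᵐ[volume] (cube ∪ (slab₂Pos ∪ slab₂Neg) : Set (ℝ × ℝ × ℝ)) := by
  refine Filter.eventuallyEq_set.2 ?_
  filter_upwards [Measure.quasiMeasurePreserving_snd.ae (Measure.ae_fst_ne (1 / 2)),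
    Measure.quasiMeasurePreserving_snd.ae (Measure.ae_fst_ne (-(1 / 2)))] with x h h'
  simp only [mem_union, mem_ofPred_eq, abs_lt]
  rcases h.lt_or_gt with h | h <;> rcases h'.lt_or_gt with h' | h' <;> grind

theorem slab₃_ae_eq :
    slab₃ =ᵐ[volume] (cube ∪ (slab₃Pos ∪ slab₃Neg) : Set (ℝ × ℝ × ℝ)) := by
  refine Filter.eventuallyEq_set.2 ?_
  filter_upwards [Measure.quasiMeasurePreserving_snd.ae (Measure.ae_snd_ne (1 / 2)),
    Measure.quasiMeasurePreserving_snd.ae (Measure.ae_snd_ne (-(1 / 2)))] with x h h'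
  simp only [mem_union, mem_ofPred_eq, abs_lt]
  rcases h.lt_or_gt with h | h <;> rcases h'.lt_or_gt with h' | h' <;> grind

theorem halfArm₁_union_slab₂_disjoint_slab₃Pos_union_slab₃Neg :
    Disjoint (halfArm₁ ∪ slab₂) (slab₃Pos ∪ slab₃Neg) :=
  disjoint_left.2 fun x hx hy => by simp only [mem_union, mem_ofPred_eq, abs_lt] at hx hy; grind

theorem halfArm₁_disjoint_slab₂ : Disjoint halfArm₁ slab₂ :=
  disjoint_left.2 fun x hx hy => by simp only [mem_ofPred_eq, abs_lt] at hx hy; grind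

theorem slab₂Pos_disjoint_slab₂Neg : Disjoint slab₂Pos slab₂Neg :=
  disjoint_left.2 fun x hx hy => by simp only [mem_ofPred_eq] at hx hy; grind

theorem slab₃Pos_disjoint_slab₃Neg : Disjoint slab₃Pos slab₃Neg :=
  disjoint_left.2 fun x hx hy => by simp only [mem_ofPred_eq] at hx hy; grind

theorem cube_disjoint_slab₂Pos_union_slab₂Neg : Disjoint cube (slab₂Pos ∪ slab₂Neg) :=
  disjoint_left.2 fun x hx hy => by simp only [mem_union, mem_ofPred_eq, abs_lt] at hx hy; grind

theorem cube_disjoint_slab₃Pos_union_slab₃Neg : Disjoint cube (slab₃Pos ∪ slab₃Neg) :=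
  disjoint_left.2 fun x hx hy => by simp only [mem_union, mem_ofPred_eq, abs_lt] at hx hy; grind

theorem halfArm₁_subset_halfJunction : halfArm₁ ⊆ halfJunction :=
  fun x hx => ⟨Or.inl (Or.inl hx.1), by linarith [hx.2]⟩

theorem slab₂_subset_halfJunction : slab₂ ⊆ halfJunction :=
  fun _ hx => ⟨Or.inl (Or.inr hx.1), hx.2⟩

theorem slab₃_subset_halfJunction : slab₃ ⊆ halfJunction :=
  fun _ hx => ⟨Or.inr hx.1, hx.2⟩

variable {f : ℝ × ℝ × ℝ → ℝ}

theorem integral_slab₂Pos_union_slab₂Neg (hf : IntegrableOn f slab₂) :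
    ∫ x in slab₂Pos ∪ slab₂Neg, f x = (∫ x in slab₂Pos, f x) + ∫ x in slab₂Neg, f x :=
  setIntegral_union slab₂Pos_disjoint_slab₂Neg (by measurability)
    (hf.mono_set (sep_subset _ _)) (hf.mono_set (sep_subset _ _))

theorem integral_slab₃Pos_union_slab₃Neg (hf : IntegrableOn f slab₃) :
    ∫ x in slab₃Pos ∪ slab₃Neg, f x = (∫ x in slab₃Pos, f x) + ∫ x in slab₃Neg, f x :=
  setIntegral_union slab₃Pos_disjoint_slab₃Neg (by measurability)
    (hf.mono_set (sep_subset _ _)) (hf.mono_set (sep_subset _ _))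

theorem integral_slab₂ (hf : IntegrableOn f slab₂) :
    ∫ x in slab₂, f x = (∫ x in cube, f x) + (∫ x in slab₂Pos, f x) + ∫ x in slab₂Neg, f x := by
  rw [setIntegral_eq_add_of_ae_eq_union slab₂_ae_eq cube_disjoint_slab₂Pos_union_slab₂Neg
    (by measurability) hf, integral_slab₂Pos_union_slab₂Neg hf, add_assoc]

theorem integral_slab₃ (hf : IntegrableOn f slab₃) :
    ∫ x in slab₃, f x = (∫ x in cube, f x) + (∫ x in slab₃Pos, f x) + ∫ x in slab₃Neg, f x := by
  rw [setIntegral_eq_add_of_ae_eq_union slab₃_ae_eq cube_disjoint_slab₃Pos_union_slab₃Neg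
    (by measurability) hf, integral_slab₃Pos_union_slab₃Neg hf, add_assoc]

theorem integral_halfJunction (hf : IntegrableOn f halfJunction) :
    ∫ x in halfJunction, f x = (∫ x in halfArm₁, f x) + (∫ x in cube, f x) +
      (∫ x in slab₂Pos, f x) + (∫ x in slab₂Neg, f x) + (∫ x in slab₃Pos, f x) +
      ∫ x in slab₃Neg, f x := by
  have hf' := hf.congr_set_ae halfJunction_ae_eq.symm
  rw [setIntegral_eq_add_of_ae_eq_union halfJunction_ae_eq
      halfArm₁_union_slab₂_disjoint_slab₃Pos_union_slab₃Neg (by measurability) hf,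
    setIntegral_union halfArm₁_disjoint_slab₂ (by measurability)
      hf'.left_of_union.left_of_union hf'.left_of_union.right_of_union,
    integral_slab₂ (hf.mono_set slab₂_subset_halfJunction),
    integral_slab₃Pos_union_slab₃Neg (hf.mono_set slab₃_subset_halfJunction)]
  ring

end CrossJunction

theorem half_junction_friedrichs_general
    (φ d1 d2 d3 : ℝ × ℝ × ℝ → ℝ)
    (L1 L2 L3 Ω Ω1p L1p Q1p S2 S3 S2p S2m S3p S3m : Set (ℝ × ℝ × ℝ))
    (hL1 : L1 = {x : ℝ × ℝ × ℝ | |x.2.1| < 1 / 2 ∧ |x.2.2| < 1 / 2})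
    (hL2 : L2 = {x : ℝ × ℝ × ℝ | |x.1| < 1 / 2 ∧ |x.2.2| < 1 / 2})
    (hL3 : L3 = {x : ℝ × ℝ × ℝ | |x.1| < 1 / 2 ∧ |x.2.1| < 1 / 2})
    (hΩ : Ω = L1 ∪ L2 ∪ L3)
    (hΩ1p : Ω1p = {x ∈ Ω | 0 < x.1})
    (hL1p : L1p = {x ∈ L1 | 1 / 2 < x.1})
    (hQ1p : Q1p = {x : ℝ × ℝ × ℝ | 0 < x.1 ∧ x.1 < 1 / 2 ∧ |x.2.1| < 1 / 2 ∧ |x.2.2| < 1 / 2})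
    (hS2 : S2 = {x ∈ L2 | 0 < x.1})
    (hS3 : S3 = {x ∈ L3 | 0 < x.1})
    (hS2p : S2p = {x ∈ S2 | 1 / 2 < x.2.1})
    (hS2m : S2m = {x ∈ S2 | x.2.1 < -(1 / 2)})
    (hS3p : S3p = {x ∈ S3 | 1 / 2 < x.2.2})
    (hS3m : S3m = {x ∈ S3 | x.2.2 < -(1 / 2)})
    (hintφ : IntegrableOn (fun x => (φ x) ^ 2) Ω1p)
    (hint1 : IntegrableOn (fun x => (d1 x) ^ 2) Ω1p)
    (hint2 : IntegrableOn (fun x => (d2 x) ^ 2) Ω1p)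
    (hint3 : IntegrableOn (fun x => (d3 x) ^ 2) Ω1p)
    (ha : 2 * π ^ 2 * ∫ x in L1p, (φ x) ^ 2 ≤
      ∫ x in L1p, ((d1 x) ^ 2 + (d2 x) ^ 2 + (d3 x) ^ 2))
    (hb : π ^ 2 * ∫ x in Q1p, (φ x) ^ 2 ≤ ∫ x in Q1p, (d1 x) ^ 2)
    (hc : π ^ 2 / 2 * ∫ x in Q1p, (φ x) ^ 2 ≤
      (∫ x in S2, (d2 x) ^ 2) + 5 * π ^ 2 / 2 * ∫ x in S2p ∪ S2m, (φ x) ^ 2)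
    (hd : π ^ 2 / 2 * ∫ x in Q1p, (φ x) ^ 2 ≤
      (∫ x in S3, (d3 x) ^ 2) + 5 * π ^ 2 / 2 * ∫ x in S3p ∪ S3m, (φ x) ^ 2)
    (he2p : 5 * π ^ 2 * ∫ x in S2p, (φ x) ^ 2 ≤ ∫ x in S2p, ((d1 x) ^ 2 + (d3 x) ^ 2))
    (he2m : 5 * π ^ 2 * ∫ x in S2m, (φ x) ^ 2 ≤ ∫ x in S2m, ((d1 x) ^ 2 + (d3 x) ^ 2))
    (he3p : 5 * π ^ 2 * ∫ x in S3p, (φ x) ^ 2 ≤ ∫ x in S3p, ((d1 x) ^ 2 + (d2 x) ^ 2))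
    (he3m : 5 * π ^ 2 * ∫ x in S3m, (φ x) ^ 2 ≤ ∫ x in S3m, ((d1 x) ^ 2 + (d2 x) ^ 2)) :
    2 * π ^ 2 * ∫ x in Ω1p, (φ x) ^ 2 ≤
      ∫ x in Ω1p, ((d1 x) ^ 2 + (d2 x) ^ 2 + (d3 x) ^ 2) := by
  subst hL1 hL2 hL3 hΩ hΩ1p hL1p hQ1p hS2 hS3 hS2p hS2m hS3p hS3m
  have hL := CrossJunction.halfArm₁_subset_halfJunction
  have h₂ := CrossJunction.slab₂_subset_halfJunction
  have h₃ := CrossJunction.slab₃_subset_halfJunction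
  rw [integral_add_add (hint1.mono_set hL) (hint2.mono_set hL) (hint3.mono_set hL)] at ha
  rw [integral_add (hint1.mono_set ((sep_subset _ _).trans h₂))
    (hint3.mono_set ((sep_subset _ _).trans h₂))] at he2p he2m
  rw [integral_add (hint1.mono_set ((sep_subset _ _).trans h₃))
    (hint2.mono_set ((sep_subset _ _).trans h₃))] at he3p he3m
  rw [CrossJunction.integral_slab₂ (hint2.mono_set h₂),
    CrossJunction.integral_slab₂Pos_union_slab₂Neg (hintφ.mono_set h₂)] at hc
  rw [CrossJunction.integral_slab₃ (hint3.mono_set h₃),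
    CrossJunction.integral_slab₃Pos_union_slab₃Neg (hintφ.mono_set h₃)] at hd
  rw [integral_add_add hint1 hint2 hint3, CrossJunction.integral_halfJunction hintφ,
    CrossJunction.integral_halfJunction hint1, CrossJunction.integral_halfJunction hint2,
    CrossJunction.integral_halfJunction hint3]
  have hφ (s : Set (ℝ × ℝ × ℝ)) : 0 ≤ π ^ 2 * ∫ x in s, φ x ^ 2 :=
    mul_nonneg (sq_nonneg π) (integral_nonneg fun x => sq_nonneg _)
  linarith [hφ CrossJunction.slab₂Pos, hφ CrossJunction.slab₂Neg, hφ CrossJunction.slab₃Pos,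
    hφ CrossJunction.slab₃Neg]

/-- Summation of Friedrichs-type bounds on the pieces of the half-junction `Ω₁⁺` of the 3D
cross of three orthogonal unit-square cylinders yields the global bound
`2π² ∫_{Ω₁⁺} φ² ≤ ∫_{Ω₁⁺} |∇φ|²`. -/
theorem half_junction_friedrichs
    (φ d1 d2 d3 : ℝ × ℝ × ℝ → ℝ)
    (hd1 : ∀ x : ℝ × ℝ × ℝ, HasDerivAt (fun t => φ (t, x.2)) (d1 x) x.1)
    (hd2 : ∀ x : ℝ × ℝ × ℝ, HasDerivAt (fun t => φ (x.1, t, x.2.2)) (d2 x) x.2.1)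
    (hd3 : ∀ x : ℝ × ℝ × ℝ, HasDerivAt (fun t => φ (x.1, x.2.1, t)) (d3 x) x.2.2)
    (L1 L2 L3 Ω Ω1p L1p Q1p S2 S3 S2p S2m S3p S3m : Set (ℝ × ℝ × ℝ))
    (hL1 : L1 = {x : ℝ × ℝ × ℝ | |x.2.1| < 1 / 2 ∧ |x.2.2| < 1 / 2})
    (hL2 : L2 = {x : ℝ × ℝ × ℝ | |x.1| < 1 / 2 ∧ |x.2.2| < 1 / 2})
    (hL3 : L3 = {x : ℝ × ℝ × ℝ | |x.1| < 1 / 2 ∧ |x.2.1| < 1 / 2})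
    (hΩ : Ω = L1 ∪ L2 ∪ L3)
    (hΩ1p : Ω1p = {x ∈ Ω | 0 < x.1})
    (hL1p : L1p = {x ∈ L1 | 1 / 2 < x.1})
    (hQ1p : Q1p = {x : ℝ × ℝ × ℝ | 0 < x.1 ∧ x.1 < 1 / 2 ∧ |x.2.1| < 1 / 2 ∧ |x.2.2| < 1 / 2})
    (hS2 : S2 = {x ∈ L2 | 0 < x.1})
    (hS3 : S3 = {x ∈ L3 | 0 < x.1})
    (hS2p : S2p = {x ∈ S2 | 1 / 2 < x.2.1})
    (hS2m : S2m = {x ∈ S2 | x.2.1 < -(1 / 2)})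
    (hS3p : S3p = {x ∈ S3 | 1 / 2 < x.2.2})
    (hS3m : S3m = {x ∈ S3 | x.2.2 < -(1 / 2)})
    (hintφ : IntegrableOn (fun x => (φ x) ^ 2) Ω1p)
    (hint1 : IntegrableOn (fun x => (d1 x) ^ 2) Ω1p)
    (hint2 : IntegrableOn (fun x => (d2 x) ^ 2) Ω1p)
    (hint3 : IntegrableOn (fun x => (d3 x) ^ 2) Ω1p)
    (ha : 2 * π ^ 2 * ∫ x in L1p, (φ x) ^ 2 ≤
      ∫ x in L1p, ((d1 x) ^ 2 + (d2 x) ^ 2 + (d3 x) ^ 2))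
    (hb : π ^ 2 * ∫ x in Q1p, (φ x) ^ 2 ≤ ∫ x in Q1p, (d1 x) ^ 2)
    (hc : π ^ 2 / 2 * ∫ x in Q1p, (φ x) ^ 2 ≤
      (∫ x in S2, (d2 x) ^ 2) + 5 * π ^ 2 / 2 * ∫ x in S2p ∪ S2m, (φ x) ^ 2)
    (hd : π ^ 2 / 2 * ∫ x in Q1p, (φ x) ^ 2 ≤
      (∫ x in S3, (d3 x) ^ 2) + 5 * π ^ 2 / 2 * ∫ x in S3p ∪ S3m, (φ x) ^ 2)
    (he2p : 5 * π ^ 2 * ∫ x in S2p, (φ x) ^ 2 ≤ ∫ x in S2p, ((d1 x) ^ 2 + (d3 x) ^ 2))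
    (he2m : 5 * π ^ 2 * ∫ x in S2m, (φ x) ^ 2 ≤ ∫ x in S2m, ((d1 x) ^ 2 + (d3 x) ^ 2))
    (he3p : 5 * π ^ 2 * ∫ x in S3p, (φ x) ^ 2 ≤ ∫ x in S3p, ((d1 x) ^ 2 + (d2 x) ^ 2))
    (he3m : 5 * π ^ 2 * ∫ x in S3m, (φ x) ^ 2 ≤ ∫ x in S3m, ((d1 x) ^ 2 + (d2 x) ^ 2)) :
    2 * π ^ 2 * ∫ x in Ω1p, (φ x) ^ 2 ≤
      ∫ x in Ω1p, ((d1 x) ^ 2 + (d2 x) ^ 2 + (d3 x) ^ 2) :=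
  half_junction_friedrichs_general φ d1 d2 d3 L1 L2 L3 Ω Ω1p L1p Q1p S2 S3 S2p S2m S3p S3m hL1 hL2
    hL3 hΩ hΩ1p hL1p hQ1p hS2 hS3 hS2p hS2m hS3p hS3m hintφ hint1 hint2 hint3 ha hb hc hd he2p he2m
    he3p he3m
end
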